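/- Let S be a countable set, P an irreducible stochastic matrix on S, ρ₁ ≤ ρ₂ real numbers, c : S → ℝ, and ψ₁, ψ₂ : S → ℝ strictly positive with e^{ρ₁} ψ₁(i) = e^{c(i)} ∑_j P(i,j) ψ₁(j) and e^{ρ₂} ψ₂(i) = e^{c(i)} ∑_j P(i,j) ψ₂(j) for all i. If there exists i₀ where ψ₁/ψ₂ attains its minimum k > 0 over S, then ρ₁ = ρ₂ and ψ₁ = k ψ₂. -/
import Mathlib


open Classical in
/-- `n`-step transition matrix of the kernel `P`. -/
noncomputable def matPow {S : Type*} (P : S → S → ℝ) : ℕ → S → S → ℝ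
  | 0 => fun i j => if i = j then 1 else 0
  | n + 1 => fun i j => ∑' k, P i k * matPow P n k j

lemma matPow_nonneg {S : Type*} (P : S → S → ℝ) (hP0 : ∀ i j, 0 ≤ P i j) :
    ∀ n i j, 0 ≤ matPow P n i j
  | 0, i, j => by unfold matPow; split <;> norm_num
  | n + 1, i, j => by
      unfold matPow
      exact tsum_nonneg fun m => mul_nonneg (hP0 i m) (matPow_nonneg P hP0 n m j)

/-- Comparison of two principal eigenpairs of the same twisted kernel on an irreducible
chain: if `ρ₁ ≤ ρ₂`, both `(ρ₁, ψ₁)` and `(ρ₂, ψ₂)` are positive eigenpairs, and the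
minimum `k` of `ψ₁/ψ₂` is attained at some `i₀`, then `ρ₁ = ρ₂` and `ψ₁ = k ψ₂`. -/
theorem twisted_eigenpair_comparison
    {S : Type*} [Countable S] (P : S → S → ℝ)
    (hP0 : ∀ i j, 0 ≤ P i j) (hP1 : ∀ i, HasSum (P i) 1)
    (hirr : ∀ i j : S, ∃ n : ℕ, 1 ≤ n ∧ 0 < matPow P n i j)
    (ρ₁ ρ₂ : ℝ) (hρ : ρ₁ ≤ ρ₂) (c : S → ℝ) (ψ₁ ψ₂ : S → ℝ)
    (hψ₁pos : ∀ i, 0 < ψ₁ i) (hψ₂pos : ∀ i, 0 < ψ₂ i)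
    (hsum₁ : ∀ i, Summable fun j => P i j * ψ₁ j)
    (hsum₂ : ∀ i, Summable fun j => P i j * ψ₂ j)
    (heig₁ : ∀ i, Real.exp ρ₁ * ψ₁ i = Real.exp (c i) * ∑' j, P i j * ψ₁ j)
    (heig₂ : ∀ i, Real.exp ρ₂ * ψ₂ i = Real.exp (c i) * ∑' j, P i j * ψ₂ j)
    (k : ℝ) (hkpos : 0 < k) (i₀ : S)
    (hk : ∀ i, k ≤ ψ₁ i / ψ₂ i) (hk₀ : ψ₁ i₀ / ψ₂ i₀ = k) :
    ρ₁ = ρ₂ ∧ ∀ i, ψ₁ i = k * ψ₂ i := by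
  have hge : ∀ i, k * ψ₂ i ≤ ψ₁ i := fun i => (le_div_iff₀ (hψ₂pos i)).mp (hk i)
  have hψeq : ψ₁ i₀ = k * ψ₂ i₀ := by
    rw [div_eq_iff (ne_of_gt (hψ₂pos i₀))] at hk₀; exact hk₀
  have hgsum : ∀ i, Summable fun j => P i j * (ψ₁ j - k * ψ₂ j) := by
    intro i
    have h : (fun j => P i j * (ψ₁ j - k * ψ₂ j))
        = fun j => P i j * ψ₁ j - k * (P i j * ψ₂ j) := by funext j; ring
    rw [h]; exact (hsum₁ i).sub ((hsum₂ i).mul_left k)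
  have hgnn : ∀ i j, 0 ≤ P i j * (ψ₁ j - k * ψ₂ j) :=
    fun i j => mul_nonneg (hP0 i j) (by linarith [hge j])
  have main : ∀ i, Real.exp ρ₁ * ψ₁ i - k * (Real.exp ρ₂ * ψ₂ i)
      = Real.exp (c i) * ∑' j, P i j * (ψ₁ j - k * ψ₂ j) := by
    intro i
    have h : (fun j => P i j * (ψ₁ j - k * ψ₂ j))
        = fun j => P i j * ψ₁ j - k * (P i j * ψ₂ j) := by funext j; ring
    rw [h, Summable.tsum_sub (hsum₁ i) ((hsum₂ i).mul_left k), tsum_mul_left]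
    linear_combination heig₁ i - k * heig₂ i
  -- at i₀
  have h0 : Real.exp ρ₁ * ψ₁ i₀ - k * (Real.exp ρ₂ * ψ₂ i₀)
      = k * ψ₂ i₀ * (Real.exp ρ₁ - Real.exp ρ₂) := by rw [hψeq]; ring
  have htnn : 0 ≤ ∑' j, P i₀ j * (ψ₁ j - k * ψ₂ j) := tsum_nonneg (hgnn i₀)
  have hle : k * ψ₂ i₀ * (Real.exp ρ₁ - Real.exp ρ₂) ≤ 0 :=
    mul_nonpos_of_nonneg_of_nonpos (mul_nonneg hkpos.le (hψ₂pos i₀).le)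
      (by linarith [Real.exp_le_exp.mpr hρ])
  have hρeq : ρ₁ = ρ₂ := by
    by_contra hne
    have hlt : ρ₁ < ρ₂ := lt_of_le_of_ne hρ hne
    have hneg : k * ψ₂ i₀ * (Real.exp ρ₁ - Real.exp ρ₂) < 0 :=
      mul_neg_of_pos_of_neg (mul_pos hkpos (hψ₂pos i₀))
        (by linarith [Real.exp_lt_exp.mpr hlt])
    have hm := main i₀
    rw [h0] at hm
    nlinarith [mul_nonneg (Real.exp_pos (c i₀)).le htnn]
  subst hρeq
  -- propagation: one step
  have prop : ∀ i, ψ₁ i = k * ψ₂ i → ∀ j, 0 < P i j → ψ₁ j = k * ψ₂ j := by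
    intro i hi j hj
    have hz : ∑' j, P i j * (ψ₁ j - k * ψ₂ j) = 0 := by
      have hm := main i
      rw [hi] at hm
      have : Real.exp ρ₁ * (k * ψ₂ i) - k * (Real.exp ρ₁ * ψ₂ i) = 0 := by ring
      rw [this] at hm
      have hec := Real.exp_pos (c i)
      exact (mul_eq_zero.mp hm.symm).resolve_left (ne_of_gt hec)
    have hle' : P i j * (ψ₁ j - k * ψ₂ j) ≤ 0 := by
      calc P i j * (ψ₁ j - k * ψ₂ j) ≤ ∑' j, P i j * (ψ₁ j - k * ψ₂ j) :=
            Summable.le_tsum (hgsum i) j (fun m _ => hgnn i m)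
        _ = 0 := hz
    have hzz : P i j * (ψ₁ j - k * ψ₂ j) = 0 := le_antisymm hle' (hgnn i j)
    rcases mul_eq_zero.mp hzz with h | h
    · exact absurd h (ne_of_gt hj)
    · linarith
  -- propagation along matPow
  have step : ∀ n : ℕ, ∀ i, ψ₁ i = k * ψ₂ i → ∀ j, 0 < matPow P n i j → ψ₁ j = k * ψ₂ j := by
    intro n
    induction n with
    | zero =>
        intro i hi j hj
        unfold matPow at hj
        by_cases h : i = j
        · subst h; exact hi
        · simp [h] at hj
    | succ n ih =>
        intro i hi j hj
        unfold matPow at hj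
        have : ∃ m, 0 < P i m * matPow P n m j := by
          by_contra hc
          push_neg at hc
          have : ∀ m, P i m * matPow P n m j = 0 := fun m =>
            le_antisymm (hc m) (mul_nonneg (hP0 i m) (matPow_nonneg P hP0 n m j))
          rw [(tsum_congr this).trans tsum_zero] at hj
          exact lt_irrefl 0 hj
        obtain ⟨m, hm⟩ := this
        have h1 : 0 < P i m := by
          rcases lt_or_eq_of_le (hP0 i m) with h | h
          · exact h
          · rw [← h] at hm; simp at hm
        have h2 : 0 < matPow P n m j := by
          rcases (matPow_nonneg P hP0 n m j).lt_or_eq with h | h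
          · exact h
          · rw [← h, mul_zero] at hm; exact absurd hm (lt_irrefl 0)
        exact ih m (prop i hi m h1) j h2
  refine ⟨rfl, fun i => ?_⟩
  obtain ⟨n, _, hn⟩ := hirr i₀ i
  exact step n i₀ hψeq i hn
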